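/- arXiv:1904.13388 — 4 statements merged into one kernel-verified Lean document; each statement's English description precedes it below -/
import Mathlib

section
/- For a quandle Q the following are equivalent: (i) for every a ∈ Q, the only fixed point of the left multiplication L_a is a itself; (ii) Q has no projection subquandle with more than one element; (iii) every subquandle of Q, with the restricted operation, is faithful. -/
universe u v

/-- A quandle structure on a type `Q`: each left multiplication `L a : b ↦ op a b`
is a bijection (with inverse `invOp a`), the operation is left self-distributive,
and every element is idempotent. -/
structure QuandleStr (Q : Type u) where
  op : Q → Q → Q
  invOp : Q → Q → Q
  inv_op : ∀ a b, invOp a (op a b) = b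
  op_inv : ∀ a b, op a (invOp a b) = b
  self_distrib : ∀ a b c, op a (op b c) = op (op a b) (op a c)
  op_self : ∀ a, op a a = a

namespace QuandleStr

variable {Q : Type u} (S : QuandleStr Q)

/-- Left multiplication as a permutation of `Q`. -/
def L (a : Q) : Equiv.Perm Q where
  toFun := S.op a
  invFun := S.invOp a
  left_inv := S.inv_op a
  right_inv := S.op_inv a

/-- The left multiplication group `LMlt(Q)`. -/
def LMlt : Subgroup (Equiv.Perm Q) := Subgroup.closure (Set.range S.L)

/-- The displacement group `Dis(Q)`, generated by `L a * (L b)⁻¹`. -/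
def Dis : Subgroup (Equiv.Perm Q) :=
  Subgroup.closure { g : Equiv.Perm Q | ∃ a b : Q, g = S.L a * (S.L b)⁻¹ }

/-- `Q` is connected if `Dis(Q)` acts transitively. -/
def IsConnected : Prop := ∀ a b : Q, ∃ g ∈ S.Dis, g a = b

/-- `Q` is semiregular if the stabilizer in `Dis(Q)` of every point is trivial. -/
def IsSemiregular : Prop := ∀ g ∈ S.Dis, ∀ x : Q, g x = x → g = 1

/-- `Q` is faithful if `a ↦ L a` is injective. -/
def IsFaithful : Prop := ∀ a b : Q, (∀ c : Q, S.op a c = S.op b c) → a = b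

/-- `Q` is latin if every right multiplication is bijective. -/
def IsLatin : Prop := ∀ a : Q, Function.Bijective (fun b => S.op b a)

/-- `Q` is a crossed set if `a*b = b` implies `b*a = a`. -/
def IsCrossedSet : Prop := ∀ a b : Q, S.op a b = b → S.op b a = a

/-- A subquandle: a nonempty subset closed under the operation and left division. -/
def IsSubquandle (A : Set Q) : Prop :=
  A.Nonempty ∧ (∀ a ∈ A, ∀ b ∈ A, S.op a b ∈ A) ∧ (∀ a ∈ A, ∀ b ∈ A, S.invOp a b ∈ A)

/-- The automorphism group of the quandle, as a subgroup of `Equiv.Perm Q`. -/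
def autGroup : Subgroup (Equiv.Perm Q) where
  carrier := { h : Equiv.Perm Q | ∀ a b : Q, h (S.op a b) = S.op (h a) (h b) }
  one_mem' := by intro a b; rfl
  mul_mem' := by
    intro g h hg hh a b
    show g (h (S.op a b)) = S.op (g (h a)) (g (h b))
    rw [hh, hg]
  inv_mem' := by
    intro g hg a b
    apply g.injective
    rw [hg]
    simp

/-- `Q` is doubly homogeneous if `Aut(Q)` acts 2-transitively. -/
def IsDoublyHomogeneous : Prop :=
  ∀ a b c d : Q, a ≠ b → c ≠ d → ∃ h ∈ S.autGroup, h a = c ∧ h b = d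

/-- The restriction of the quandle structure to a subset closed under both operations. -/
def restrict (A : Set Q) (h1 : ∀ a ∈ A, ∀ b ∈ A, S.op a b ∈ A)
    (h2 : ∀ a ∈ A, ∀ b ∈ A, S.invOp a b ∈ A) : QuandleStr A where
  op a b := ⟨S.op a b, h1 a a.2 b b.2⟩
  invOp a b := ⟨S.invOp a b, h2 a a.2 b b.2⟩
  inv_op a b := Subtype.ext (S.inv_op a b)
  op_inv a b := Subtype.ext (S.op_inv a b)
  self_distrib a b c := Subtype.ext (S.self_distrib a b c)
  op_self a := Subtype.ext (S.op_self a)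

/-- The stabilizer of a point in the displacement group, as a set of permutations. -/
def disStab (x : Q) : Set (Equiv.Perm Q) := { g : Equiv.Perm Q | g ∈ S.Dis ∧ g x = x }

/-- The class of `a` under the relation `σ_Q`: elements with the same stabilizer in `Dis(Q)`. -/
def sigmaClass (a : Q) : Set Q := { b : Q | S.disStab b = S.disStab a }

/-- A quandle is strictly simple if it has at least two elements and no proper subquandle. -/
def IsStrictlySimple : Prop :=
  (∃ a b : Q, a ≠ b) ∧
    ∀ A : Set Q, S.IsSubquandle A → (∀ a ∈ A, ∀ b ∈ A, a = b) ∨ A = Set.univ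

/-- A subset which is a strictly simple subquandle (with the restricted operation). -/
def IsStrictlySimpleSub (A : Set Q) : Prop :=
  S.IsSubquandle A ∧ (∃ a ∈ A, ∃ b ∈ A, a ≠ b) ∧
    ∀ B : Set Q, B ⊆ A → S.IsSubquandle B → (∀ x ∈ B, ∀ y ∈ B, x = y) ∨ B = A

/-- A congruence of a quandle. -/
structure IsCongruence (r : Q → Q → Prop) : Prop where
  refl : ∀ a, r a a
  symm : ∀ {a b}, r a b → r b a
  trans : ∀ {a b c}, r a b → r b c → r a c
  op_compat : ∀ {a b c d}, r a b → r c d → r (S.op a c) (S.op b d)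
  invOp_compat : ∀ {a b c d}, r a b → r c d → r (S.invOp a c) (S.invOp b d)

/-- A quandle is simple if it has at least two elements and its only congruences are
the equality relation and the all relation. -/
def IsSimple : Prop :=
  (∃ a b : Q, a ≠ b) ∧
    ∀ r : Q → Q → Prop, S.IsCongruence r → (∀ a b, r a b ↔ a = b) ∨ (∀ a b, r a b)

end QuandleStr

/-- The product of a family of quandles, with componentwise operation. -/
def piQuandle {I : Type u} {Q : I → Type v} (S : ∀ i, QuandleStr (Q i)) :
    QuandleStr (∀ i, Q i) where
  op a b := fun i => (S i).op (a i) (b i)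
  invOp a b := fun i => (S i).invOp (a i) (b i)
  inv_op a b := funext fun i => (S i).inv_op (a i) (b i)
  op_inv a b := funext fun i => (S i).op_inv (a i) (b i)
  self_distrib a b c := funext fun i => (S i).self_distrib (a i) (b i) (c i)
  op_self a := funext fun i => (S i).op_self (a i)

/-- The principal quandle `Q_Hom(G, f)` over a group `G` with automorphism `f`:
the underlying set is `G` with `a * b = a · f(a⁻¹ b)`. -/
def principalQuandle {G : Type u} [Group G] (f : G ≃* G) : QuandleStr G where
  op a b := a * f (a⁻¹ * b)
  invOp a b := a * f.symm (a⁻¹ * b)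
  inv_op a b := by simp
  op_inv a b := by simp
  self_distrib a b c := by
    simp only [map_mul, map_inv, mul_inv_rev, mul_assoc, inv_mul_cancel_left,
      mul_inv_cancel_left, inv_inv]
  op_self a := by simp

/-- The affine quandle `Aff(A, f)` over an abelian group `A` with automorphism `f`:
the underlying set is `A` with `a * b = a - f a + f b`. -/
def affineQuandle {A : Type u} [AddCommGroup A] (f : A ≃+ A) : QuandleStr A where
  op a b := a - f a + f b
  invOp a b := f.symm (b - a + f a)
  inv_op a b := by
    try dsimp only
    have h : (a - f a + f b) - a + f a = f b := by abel
    rw [h, f.symm_apply_apply]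
  op_inv a b := by
    try dsimp only
    rw [f.apply_symm_apply]
    abel
  self_distrib a b c := by
    try dsimp only
    simp only [map_add, map_sub]
    abel
  op_self a := by
    try dsimp only
    rw [sub_add_cancel]

/-- A witness that a quandle is principal: a group `G`, an automorphism `f`, and a
quandle isomorphism with `Q_Hom(G, f)`. -/
structure PrincipalWitness {Q : Type u} (S : QuandleStr Q) : Type (u + 1) where
  G : Type u
  [grp : Group G]
  f : G ≃* G
  e : Q ≃ G
  hop : ∀ a b : Q, e (S.op a b) = (principalQuandle f).op (e a) (e b)

/-- A quandle is principal if it is isomorphic to some `Q_Hom(G, f)`. -/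
def IsPrincipal {Q : Type u} (S : QuandleStr Q) : Prop := Nonempty (PrincipalWitness S)

/-! If `a * b = b` then `L a` commutes with `L b`, so `L a` fixes every point of the
`⟨L b⟩`-orbit of `a`, which makes that orbit a projection subquandle. Collapsing it gives `b * a = a`,
and then `{a, b}` is itself a projection subquandle. -/

namespace QuandleStr

variable {Q : Type u} (S : QuandleStr Q)

lemma isSubquandle_of_op_eq_right {A : Set Q} (hne : A.Nonempty)
    (hproj : ∀ x ∈ A, ∀ y ∈ A, S.op x y = y) : S.IsSubquandle A := by
  refine ⟨hne, fun x hx y hy => by rwa [hproj x hx y hy], fun x hx y hy => ?_⟩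
  have hinv : S.invOp x y = y := by
    conv_lhs => rw [← hproj x hx y hy]
    exact S.inv_op x y
  rwa [hinv]

lemma L_mem_autGroup (a : Q) : S.L a ∈ S.autGroup :=
  fun x y => S.self_distrib a x y

lemma L_commute_of_op_eq {a b : Q} (hab : S.op a b = b) : Commute (S.L a) (S.L b) :=
  Equiv.ext fun x => by
    show S.op a (S.op b x) = S.op b (S.op a x)
    rw [S.self_distrib, hab]

/-- Conjugating by automorphisms reduces `g a * h a = h a` to `a * (g⁻¹ h) a = (g⁻¹ h) a`. -/
lemma op_orbit_eq_right {G : Subgroup (Equiv.Perm Q)} (hG : G ≤ S.autGroup) {a : Q}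
    (hfix : ∀ g ∈ G, S.op a (g a) = g a) {g h : Equiv.Perm Q} (hg : g ∈ G) (hh : h ∈ G) :
    S.op (g a) (h a) = h a := by
  have hgh : h a = g ((g⁻¹ * h) a) := by simp
  rw [hgh, ← hG hg, hfix _ (G.mul_mem (G.inv_mem hg) hh)]

lemma op_zpow_L_apply_of_op_eq {a b : Q} (hab : S.op a b = b) (n : ℤ) :
    S.op a ((S.L b ^ n) a) = (S.L b ^ n) a :=
  (Equiv.congr_fun ((S.L_commute_of_op_eq hab).zpow_right n).eq a).trans
    (congrArg _ (S.op_self a))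

end QuandleStr

/-- For a quandle `Q` the following are equivalent:
(i) for every `a ∈ Q` the only fixed point of `L a` is `a` itself;
(ii) `Q` has no projection subquandle with more than one element;
(iii) every subquandle of `Q`, with the restricted operation, is faithful. -/
theorem statement0 {Q : Type u} (S : QuandleStr Q) :
    List.TFAE
      [ ∀ a b : Q, S.op a b = b → b = a,
        ∀ A : Set Q, S.IsSubquandle A → (∀ x ∈ A, ∀ y ∈ A, S.op x y = y) →
          ∀ x ∈ A, ∀ y ∈ A, x = y,
        ∀ A : Set Q, S.IsSubquandle A →
          ∀ a ∈ A, ∀ b ∈ A, (∀ c ∈ A, S.op a c = S.op b c) → a = b ] := by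
  tfae_have 1 → 3 := fun h1 A _ a _ b hb hab => (h1 a b (by rw [hab b hb, S.op_self])).symm
  tfae_have 3 → 2 := fun h3 A hA hproj x hx y hy =>
    h3 A hA x hx y hy fun c hc => by rw [hproj x hx c hc, hproj y hy c hc]
  tfae_have 2 → 1 := by
    intro h2 a b hab
    let G := Subgroup.zpowers (S.L b)
    have hG : G ≤ S.autGroup := Subgroup.zpowers_le.2 (S.L_mem_autGroup b)
    have hfix : ∀ g ∈ G, S.op a (g a) = g a := by
      rintro _ ⟨n, rfl⟩
      exact S.op_zpow_L_apply_of_op_eq hab n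
    let orbit : Set Q := {x | ∃ g ∈ G, g a = x}
    have horbit : ∀ x ∈ orbit, ∀ y ∈ orbit, S.op x y = y := by
      rintro _ ⟨g, hg, rfl⟩ _ ⟨h, hh, rfl⟩
      exact S.op_orbit_eq_right hG hfix hg hh
    have hba : S.op b a = a :=
      h2 orbit (S.isSubquandle_of_op_eq_right ⟨a, 1, G.one_mem, rfl⟩ horbit) horbit
        _ ⟨S.L b, Subgroup.mem_zpowers _, rfl⟩ _ ⟨1, G.one_mem, rfl⟩
    have hpair : ∀ x ∈ ({a, b} : Set Q), ∀ y ∈ ({a, b} : Set Q), S.op x y = y := by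
      rintro x (rfl | rfl) y (rfl | rfl) <;> simp only [S.op_self, hab, hba]
    exact h2 {a, b} (S.isSubquandle_of_op_eq_right (Set.insert_nonempty a {b}) hpair) hpair
      b (Set.mem_insert_of_mem a rfl) a (Set.mem_insert a {b})
  tfae_finish
end

section
/- Let Q be a semiregular quandle. Then Q is a crossed set, and the following are equivalent: (i) Q is faithful; (ii) Q has no projection subquandle with more than one element; (iii) every right multiplication R_a : b ↦ b*a is injective. -/
universe u v

/-!
If `a * x = b * x` for a single `x`, then `L a * (L b)⁻¹ ∈ Dis(Q)` fixes `b * x`, so semiregularity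
forces `L a = L b`. Hence the left multiplications of two elements agree as soon as they agree at one
point; in particular `a * b = b = b * b` gives `L a = L b`, whence `b * a = a`. Each of the three
conditions then amounts to injectivity of `a ↦ L a`, the fibres of which are projection subquandles.
-/

namespace QuandleStr

variable {Q : Type u} {S : QuandleStr Q}

theorem L_apply (a b : Q) : S.L a b = S.op a b := rfl

theorem op_eq_of_L_eq {a b : Q} (h : S.L a = S.L b) : S.op a b = b := by
  rw [← L_apply, h, L_apply, op_self]

theorem invOp_eq_of_op_eq {a b : Q} (h : S.op a b = b) : S.invOp a b = b := by
  conv_lhs => rw [← h]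
  exact S.inv_op a b

theorem isSubquandle_setOf_L_eq (a : Q) : S.IsSubquandle {c | S.L c = S.L a} := by
  refine ⟨⟨a, rfl⟩, fun x hx y hy => ?_, fun x hx y hy => ?_⟩
  · rw [op_eq_of_L_eq (hx.trans hy.symm)]
    exact hy
  · rw [invOp_eq_of_op_eq (op_eq_of_L_eq (hx.trans hy.symm))]
    exact hy

theorem IsFaithful.eq_of_L_eq (hf : S.IsFaithful) {a b : Q} (h : S.L a = S.L b) : a = b :=
  hf a b fun c => DFunLike.congr_fun h c

theorem isFaithful_of_injective_op_right
    (h : ∀ a : Q, Function.Injective (fun b => S.op b a)) : S.IsFaithful :=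
  fun a _ hab => (h a (hab a).symm).symm

theorem IsSemiregular.L_eq_of_op_eq (hsr : S.IsSemiregular) {a b x : Q}
    (h : S.op a x = S.op b x) : S.L a = S.L b := by
  have hmem : S.L a * (S.L b)⁻¹ ∈ S.Dis := Subgroup.subset_closure ⟨a, b, rfl⟩
  refine mul_inv_eq_one.mp (hsr _ hmem (S.op b x) ?_)
  rw [Equiv.Perm.mul_apply, ← L_apply b x, Equiv.Perm.inv_def, Equiv.symm_apply_apply, L_apply,
    L_apply, h]

theorem IsSemiregular.L_eq_of_op_eq_self (hsr : S.IsSemiregular) {a b : Q}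
    (h : S.op a b = b) : S.L a = S.L b :=
  hsr.L_eq_of_op_eq (h.trans (S.op_self b).symm)

theorem IsSemiregular.isCrossedSet (hsr : S.IsSemiregular) : S.IsCrossedSet :=
  fun _ _ h => op_eq_of_L_eq (hsr.L_eq_of_op_eq_self h).symm

end QuandleStr

/-- A semiregular quandle is a crossed set, and the following are
equivalent: (i) `Q` is faithful; (ii) `Q` has no projection subquandle with more
than one element; (iii) every right multiplication is injective. -/
theorem statement2 {Q : Type u} (S : QuandleStr Q) (hsr : S.IsSemiregular) :
    S.IsCrossedSet ∧
    List.TFAE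
      [ S.IsFaithful,
        ∀ A : Set Q, S.IsSubquandle A → (∀ x ∈ A, ∀ y ∈ A, S.op x y = y) →
          ∀ x ∈ A, ∀ y ∈ A, x = y,
        ∀ a : Q, Function.Injective (fun b => S.op b a) ] := by
  refine ⟨hsr.isCrossedSet, ?_⟩
  tfae_have 1 → 3 := fun hf _ _ _ h => hf.eq_of_L_eq (hsr.L_eq_of_op_eq h)
  tfae_have 3 → 1 := QuandleStr.isFaithful_of_injective_op_right
  tfae_have 1 → 2 := fun hf _ _ hproj x hx y hy =>
    hf.eq_of_L_eq (hsr.L_eq_of_op_eq_self (hproj x hx y hy))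
  tfae_have 2 → 1 := fun h a b hab =>
    (h _ (QuandleStr.isSubquandle_setOf_L_eq a)
      (fun _ hx _ hy => QuandleStr.op_eq_of_L_eq (hx.trans hy.symm)) b (Equiv.ext hab).symm a rfl).symm
  tfae_finish
end

section
/- Let Q = Aff(A,f) be an affine quandle. Then Q is latin if and only if Q is connected and faithful. Moreover, if Q is finite and connected, then Q is latin. -/
universe u v

/-! In `Aff(A, f)` everything is governed by the endomorphism `1 - f`: the right
multiplication `b ↦ b * a = (1 - f) b + f a` is `1 - f` followed by a translation, each
generator `L a ∘ L b⁻¹` of `Dis` is the translation by `(1 - f)(a - b)`, and `L a = L b`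
exactly when `(1 - f) a = (1 - f) b`. Hence latin, connected and faithful mean that `1 - f` is
bijective, surjective and injective respectively, and on a finite group surjectivity already
gives injectivity. -/

namespace affineQuandle

variable {A : Type u} [AddCommGroup A] (f : A ≃+ A)

theorem op_apply (a b : A) : (affineQuandle f).op a b = a - f a + f b := rfl

theorem L_mul_L_inv_apply (a b x : A) :
    ((affineQuandle f).L a * ((affineQuandle f).L b)⁻¹) x = x + ((a - f a) - (b - f b)) := by
  change a - f a + f (f.symm (x - b + f b)) = _
  rw [AddEquiv.apply_symm_apply]
  abel

theorem exists_eq_add_sub_of_mem_dis {g : Equiv.Perm A} (hg : g ∈ (affineQuandle f).Dis) :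
    ∃ u : A, ∀ x, g x = x + (u - f u) := by
  induction hg using Subgroup.closure_induction with
  | mem g hg =>
    obtain ⟨a, b, rfl⟩ := hg
    exact ⟨a - b, fun x => by rw [L_mul_L_inv_apply, map_sub]; abel⟩
  | one => exact ⟨0, fun x => by simp⟩
  | mul g h _ _ ihg ihh =>
    obtain ⟨u, hu⟩ := ihg
    obtain ⟨v, hv⟩ := ihh
    exact ⟨u + v, fun x => by rw [Equiv.Perm.mul_apply, hu, hv, map_add]; abel⟩
  | inv g _ ih =>
    obtain ⟨u, hu⟩ := ih
    refine ⟨-u, fun x => ?_⟩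
    have hx := hu (g⁻¹ x)
    rw [Equiv.Perm.coe_inv, Equiv.apply_symm_apply] at hx
    rw [Equiv.Perm.coe_inv, map_neg, eq_sub_of_add_eq hx.symm]
    abel

theorem isConnected_iff : (affineQuandle f).IsConnected ↔
    Function.Surjective (fun a => a - f a) := by
  constructor
  · intro hconn y
    obtain ⟨g, hg, hgy⟩ := hconn 0 y
    obtain ⟨u, hu⟩ := exists_eq_add_sub_of_mem_dis f hg
    exact ⟨u, by rw [← hgy, hu, zero_add]⟩
  · intro hsurj a b
    obtain ⟨c, hc : c - f c = b - a⟩ := hsurj (b - a)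
    refine ⟨(affineQuandle f).L c * ((affineQuandle f).L 0)⁻¹,
      Subgroup.subset_closure ⟨c, 0, rfl⟩, ?_⟩
    rw [L_mul_L_inv_apply, map_zero, sub_zero, sub_zero, hc, add_sub_cancel]

theorem isFaithful_iff : (affineQuandle f).IsFaithful ↔
    Function.Injective (fun a => a - f a) := by
  constructor
  · intro hfaith a b (hab : a - f a = b - f b)
    exact hfaith a b fun c => by rw [op_apply, op_apply, hab]
  · intro hinj a b hab
    exact hinj (add_right_cancel (hab 0))

theorem isLatin_iff : (affineQuandle f).IsLatin ↔
    Function.Bijective (fun a => a - f a) := by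
  have hR (a : A) :
      (fun b => (affineQuandle f).op b a) = (· + f a) ∘ (fun b => b - f b) := rfl
  simp only [QuandleStr.IsLatin, hR]
  exact ⟨fun h => ((Equiv.addRight (f 0)).bijective.of_comp_iff' _).mp (h 0),
    fun h a => (Equiv.addRight (f a)).bijective.comp h⟩

end affineQuandle

/-- An affine quandle `Aff(A, f)` is latin if and only if it is connected
and faithful; moreover, a finite connected affine quandle is latin. -/
theorem statement6 {A : Type u} [AddCommGroup A] (f : A ≃+ A) :
    ((affineQuandle f).IsLatin ↔
      ((affineQuandle f).IsConnected ∧ (affineQuandle f).IsFaithful)) ∧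
    (Finite A → (affineQuandle f).IsConnected → (affineQuandle f).IsLatin) := by
  rw [affineQuandle.isLatin_iff, affineQuandle.isConnected_iff, affineQuandle.isFaithful_iff]
  exact ⟨and_comm, fun _ hsurj => ⟨Finite.injective_iff_surjective.mpr hsurj, hsurj⟩⟩
end

section
/- Let Q = Q_Hom(G,f) be a principal quandle which is connected. Then the automorphism group Aut(Q) is isomorphic to the semidirect product G ⋊ C_{Aut(G)}(f), where C_{Aut(G)}(f) = {g ∈ Aut(G) : g∘f = f∘g} is the centralizer of f in Aut(G), acting on G in the natural way. -/
universe u v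

/-!
Left translations `x ↦ g * x` are automorphisms of `Q_Hom(G, f)`, and so are the automorphisms
of `G` commuting with `f`; together they give a homomorphism `G ⋊ C_{Aut(G)}(f) → Aut(Q)`,
injective by evaluation at `1`. For surjectivity it suffices to treat an automorphism `h` with
`h 1 = 1`. Every generator `L a ∘ (L b)⁻¹` of `Dis(Q)` is a left translation, so `Dis(Q)`
consists of left translations, and by connectedness it contains all of them. Automorphisms
normalize `Dis(Q)`, so `h ∘ τ_g ∘ h⁻¹` is a translation, necessarily by `h g`: thus `h` is
multiplicative, and the automorphism identity for `1 ∗ b = f b` reads `h ∘ f = f ∘ h`.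
-/

namespace QuandleStr

variable {Q : Type u} (S : QuandleStr Q)

theorem mul_L_mul_inv_of_mem_autGroup {h : Equiv.Perm Q} (hh : h ∈ S.autGroup) (a : Q) :
    h * S.L a * h⁻¹ = S.L (h a) := by
  ext x
  show h (S.op a (h⁻¹ x)) = S.op (h a) x
  rw [hh]
  simp

theorem conj_mem_Dis {h : Equiv.Perm Q} (hh : h ∈ S.autGroup) {d : Equiv.Perm Q}
    (hd : d ∈ S.Dis) : h * d * h⁻¹ ∈ S.Dis := by
  suffices S.Dis.map (MulAut.conj h).toMonoidHom ≤ S.Dis from this ⟨d, hd, rfl⟩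
  rw [Dis, MonoidHom.map_closure, Subgroup.closure_le]
  rintro _ ⟨_, ⟨a, b, rfl⟩, rfl⟩
  refine Subgroup.subset_closure ⟨h a, h b, ?_⟩
  rw [← S.mul_L_mul_inv_of_mem_autGroup hh, ← S.mul_L_mul_inv_of_mem_autGroup hh]
  simp [mul_assoc]

end QuandleStr

namespace principalQuandle

open MulAction (toPerm toPermHom)

variable {G : Type u} [Group G] (f : MulAut G)

theorem L_mul_L_inv (a b : G) :
    (principalQuandle f).L a * ((principalQuandle f).L b)⁻¹ = toPerm (a * f (a⁻¹ * b) * b⁻¹) := by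
  ext x
  show a * f (a⁻¹ * (b * f.symm (b⁻¹ * x))) = a * f (a⁻¹ * b) * b⁻¹ * x
  rw [← mul_assoc a⁻¹ b, map_mul, MulEquiv.apply_symm_apply]
  group

theorem Dis_le_range_toPermHom : (principalQuandle f).Dis ≤ (toPermHom G G).range := by
  rw [QuandleStr.Dis, Subgroup.closure_le]
  rintro _ ⟨a, b, rfl⟩
  exact ⟨_, (L_mul_L_inv f a b).symm⟩

theorem eq_toPerm_of_mem_Dis {d : Equiv.Perm G} (hd : d ∈ (principalQuandle f).Dis) :
    d = toPerm (d 1) := by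
  obtain ⟨g, rfl⟩ := Dis_le_range_toPermHom f hd
  ext x
  simp

theorem toPerm_mem_Dis (hc : (principalQuandle f).IsConnected) (g : G) :
    toPerm g ∈ (principalQuandle f).Dis := by
  obtain ⟨d, hd, hd1⟩ := hc 1 g
  rwa [← hd1, ← eq_toPerm_of_mem_Dis f hd]

theorem toPerm_mem_autGroup (g : G) : toPerm g ∈ (principalQuandle f).autGroup := by
  intro a b
  show g * (a * f (a⁻¹ * b)) = g * a * f ((g * a)⁻¹ * (g * b))
  rw [mul_inv_rev, mul_assoc a⁻¹ g⁻¹, inv_mul_cancel_left, mul_assoc]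

theorem toPerm_mem_autGroup_of_commute {θ : MulAut G} (hθ : Commute θ f) :
    MulAut.toPerm G θ ∈ (principalQuandle f).autGroup := by
  intro a b
  show θ (a * f (a⁻¹ * b)) = θ a * f ((θ a)⁻¹ * θ b)
  rw [map_mul, ← MulAut.mul_apply, hθ.eq, MulAut.mul_apply, map_mul, map_inv]

/-- Conjugating the translation by `g` with `h` gives a displacement, hence a translation,
which must be the translation by `h g`. -/
theorem map_mul_of_mem_autGroup (hc : (principalQuandle f).IsConnected) {h : Equiv.Perm G}
    (hh : h ∈ (principalQuandle f).autGroup) (h1 : h 1 = 1) (g x : G) :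
    h (g * x) = h g * h x := by
  have hconj := eq_toPerm_of_mem_Dis f
    ((principalQuandle f).conj_mem_Dis hh (toPerm_mem_Dis f hc g))
  have h1' : h⁻¹ 1 = 1 := by rw [Equiv.Perm.inv_eq_iff_eq, h1]
  simp only [Equiv.Perm.mul_apply, h1', MulAction.toPerm_apply, smul_eq_mul, mul_one] at hconj
  simpa using congr($hconj (h x))

theorem map_apply_of_mem_autGroup {h : Equiv.Perm G} (hh : h ∈ (principalQuandle f).autGroup)
    (h1 : h 1 = 1) (x : G) : h (f x) = f (h x) := by
  simpa [principalQuandle, h1] using hh 1 x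

theorem exists_mem_centralizer_toPerm_eq (hc : (principalQuandle f).IsConnected)
    {h : Equiv.Perm G} (hh : h ∈ (principalQuandle f).autGroup) (h1 : h 1 = 1) :
    ∃ θ ∈ Subgroup.centralizer {f}, MulAut.toPerm G θ = h := by
  refine ⟨MulEquiv.mk' h (map_mul_of_mem_autGroup f hc hh h1), ?_, rfl⟩
  rw [Subgroup.mem_centralizer_singleton_iff]
  ext x
  exact map_apply_of_mem_autGroup f hh h1 x

def translationHom : G →* (principalQuandle f).autGroup :=
  (toPermHom G G).codRestrict _ (toPerm_mem_autGroup f)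

def centralizerHom : Subgroup.centralizer {f} →* (principalQuandle f).autGroup :=
  ((MulAut.toPerm G).comp (Subgroup.centralizer {f}).subtype).codRestrict _ fun θ =>
    toPerm_mem_autGroup_of_commute f (Subgroup.mem_centralizer_singleton_iff.mp θ.2)

theorem translationHom_comp_centralizer (θ : Subgroup.centralizer {f}) :
    (translationHom f).comp ((Subgroup.centralizer {f}).subtype θ).toMonoidHom =
      (MulAut.conj (centralizerHom f θ)).toMonoidHom.comp (translationHom f) := by
  ext g x
  show θ.1 g * x = θ.1 (g * θ.1.symm x)
  rw [map_mul, MulEquiv.apply_symm_apply]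

def autGroupHom :
    SemidirectProduct G (Subgroup.centralizer {f}) (Subgroup.centralizer {f}).subtype →*
      (principalQuandle f).autGroup :=
  SemidirectProduct.lift (translationHom f) (centralizerHom f) (translationHom_comp_centralizer f)

theorem coe_autGroupHom
    (p : SemidirectProduct G (Subgroup.centralizer {f}) (Subgroup.centralizer {f}).subtype) :
    (autGroupHom f p : Equiv.Perm G) = toPerm p.left * MulAut.toPerm G p.right := rfl

theorem autGroupHom_injective : Function.Injective (autGroupHom f) := by
  rw [injective_iff_map_eq_one]
  intro p hp
  have hperm : toPerm p.left * MulAut.toPerm G p.right = 1 := by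
    rw [← coe_autGroupHom, hp]
    rfl
  have hleft : p.left = 1 := by simpa using (congr($hperm 1) : p.left * p.right.1 1 = 1)
  refine SemidirectProduct.ext hleft (Subtype.ext ?_)
  ext x
  simpa [hleft] using (congr($hperm x) : p.left * p.right.1 x = x)

theorem autGroupHom_surjective (hc : (principalQuandle f).IsConnected) :
    Function.Surjective (autGroupHom f) := by
  rintro ⟨h, hh⟩
  have hh' : toPerm (h 1)⁻¹ * h ∈ (principalQuandle f).autGroup :=
    mul_mem (toPerm_mem_autGroup f _) hh
  obtain ⟨θ, hθ, hθh⟩ := exists_mem_centralizer_toPerm_eq f hc hh' (by simp)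
  refine ⟨⟨h 1, ⟨θ, hθ⟩⟩, Subtype.ext ?_⟩
  rw [coe_autGroupHom, hθh]
  ext x
  simp

end principalQuandle

/-- For a connected principal quandle `Q = Q_Hom(G, f)`, the automorphism
group of `Q` is isomorphic to the semidirect product `G ⋊ C_{Aut(G)}(f)`, where the
centralizer of `f` in `Aut(G)` acts on `G` in the natural way. -/
theorem statement7 {G : Type u} [Group G] (f : MulAut G)
    (hc : (principalQuandle f).IsConnected) :
    Nonempty
      ((↥(principalQuandle f).autGroup) ≃*
        SemidirectProduct G (↥(Subgroup.centralizer ({f} : Set (MulAut G))))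
          (Subgroup.centralizer ({f} : Set (MulAut G))).subtype) := by
  exact ⟨(MulEquiv.ofBijective _
    ⟨principalQuandle.autGroupHom_injective f, principalQuandle.autGroupHom_surjective f hc⟩).symm⟩
end
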